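/- arXiv:2410.18859 — 2 statements merged into one kernel-verified Lean document; each statement's English description precedes it below -/
import Mathlib

section
/- Let p, q ≥ 1 be integers, let B be an antisymmetric p×p integer matrix, let A be an antisymmetric q×q integer matrix, let c ∈ {1,…,p}, and let C be the p×q integer matrix each of whose columns equals the c-th column of B. Then the antisymmetric (p+q)×(p+q) block matrix [[B, C],[−Cᵀ, A]] is equivalent to the block-diagonal matrix [[B, 0],[0, A]]. -/
/-!
Conjugating by the unimodular block matrix `T = [[1, 0], [-Yᵀ, 1]]` turns `[[B, BY], [-(BY)ᵀ, A]]`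
into `[[B, 0], [0, A - YᵀBY]]` when `B` is antisymmetric. The hypothesis on `C` says `C = BY`,
where every column of `Y` is the `c`-th unit vector, so `YᵀBY` has all entries `B c c = 0`.
-/

open Matrix

/-- Two integer matrices are equivalent if `B = T * A * Tᵀ` for some `T ∈ GL(N, ℤ)`. -/
def MatEquiv {n : Type*} [Fintype n] [DecidableEq n] (A B : Matrix n n ℤ) : Prop :=
  ∃ T : Matrix n n ℤ, IsUnit T.det ∧ B = T * A * Tᵀ

variable {m n : Type*} [Fintype m] [Fintype n] [DecidableEq m] [DecidableEq n]

theorem fromBlocks_one_zero_mul_fromBlocks_mul_transpose {R : Type*} [CommRing R]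
    (B : Matrix m m R) (C : Matrix m n R) (D : Matrix n m R) (A : Matrix n n R)
    (X : Matrix n m R) :
    fromBlocks 1 0 X 1 * fromBlocks B C D A * (fromBlocks 1 0 X 1)ᵀ =
      fromBlocks B (B * Xᵀ + C) (X * B + D) ((X * B + D) * Xᵀ + (X * C + A)) := by
  simp only [fromBlocks_transpose, transpose_one, transpose_zero, fromBlocks_multiply,
    Matrix.one_mul, Matrix.mul_one, Matrix.zero_mul, Matrix.mul_zero, add_zero]

theorem matEquiv_fromBlocks_mul_of_transpose_mul_mul_eq_zero
    (B : Matrix m m ℤ) (A : Matrix n n ℤ) (hB : Bᵀ = -B)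
    (Y : Matrix m n ℤ) (hY : Yᵀ * B * Y = 0) :
    MatEquiv (fromBlocks B (B * Y) (-(B * Y)ᵀ) A) (fromBlocks B 0 0 A) := by
  refine ⟨fromBlocks 1 0 (-Yᵀ) 1, by simp, ?_⟩
  have hBY : (B * Y)ᵀ = -(Yᵀ * B) := by rw [transpose_mul, hB, Matrix.mul_neg]
  rw [fromBlocks_one_zero_mul_fromBlocks_mul_transpose, hBY]
  simp only [transpose_neg, transpose_transpose, neg_neg, Matrix.mul_neg, Matrix.neg_mul,
    ← Matrix.mul_assoc, hY]
  simp

theorem transpose_replicateCol_single_mul_mul_replicateCol_single {R ι : Type*} [Semiring R]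
    (B : Matrix m m R) (c : m) :
    (replicateCol ι (Pi.single c (1 : R)))ᵀ * B * replicateCol ι (Pi.single c (1 : R)) =
      of fun _ _ => B c c := by
  ext i j
  simp [← replicateRow_vecMul]

theorem block_split_equiv_general (p q : ℕ)
    (B : Matrix (Fin p) (Fin p) ℤ) (A : Matrix (Fin q) (Fin q) ℤ)
    (hB : Bᵀ = -B)
    (c : Fin p) (C : Matrix (Fin p) (Fin q) ℤ) (hC : ∀ i j, C i j = B i c) :
    MatEquiv (Matrix.fromBlocks B C (-Cᵀ) A) (Matrix.fromBlocks B 0 0 A) := by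
  set Y : Matrix (Fin p) (Fin q) ℤ := replicateCol (Fin q) (Pi.single c 1)
  have hCY : C = B * Y := by
    ext i j
    simp [Y, ← replicateCol_mulVec, hC]
  have hBcc : B c c = 0 := by
    have h := congrFun (congrFun hB c) c
    simp only [transpose_apply, neg_apply] at h
    omega
  have hY : Yᵀ * B * Y = 0 := by
    rw [transpose_replicateCol_single_mul_mul_replicateCol_single, hBcc]
    rfl
  rw [hCY]
  exact matEquiv_fromBlocks_mul_of_transpose_mul_mul_eq_zero B A hB Y hY

/-- if `B` (p×p) and `A` (q×q) are antisymmetric integer matrices and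
every column of `C` equals the `c`-th column of `B`, then the antisymmetric block
matrix `[[B, C], [-Cᵀ, A]]` is equivalent to `[[B, 0], [0, A]]`. -/
theorem block_split_equiv (p q : ℕ) (hp : 1 ≤ p) (hq : 1 ≤ q)
    (B : Matrix (Fin p) (Fin p) ℤ) (A : Matrix (Fin q) (Fin q) ℤ)
    (hB : Bᵀ = -B) (hA : Aᵀ = -A)
    (c : Fin p) (C : Matrix (Fin p) (Fin q) ℤ) (hC : ∀ i j, C i j = B i c) :
    MatEquiv (Matrix.fromBlocks B C (-Cᵀ) A) (Matrix.fromBlocks B 0 0 A) :=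
  block_split_equiv_general p q B A hB c C hC
end

section
/- Let m ≥ 1 and n, ℓ be positive integers with n ≤ 2ℓ−2 if n is even and n ≤ 2ℓ−1 if n is odd. Define diagonal real (2m+1)×(2m+1) matrices P_{i,n} for 1 ≤ i ≤ 2ℓ as follows: P_{i,n} = diag(−i, i, …, i) if i is odd and i ≤ n; P_{i,n} = diag(i, −i, i, …, i) if i is even and i ≤ n; P_{i,n} = diag(i, i, 1/i, …, 1/i) if n+1 ≤ i ≤ 2ℓ−2; P_{2ℓ−1,n} = diag(2ℓ−1, 2ℓ−1, 1/(2ℓ−1), …, 1/(2ℓ−1)) if n is odd and P_{2ℓ−1,n} = diag(2ℓ−1, 2ℓ−1, 0, …, 0) if n is even; P_{2ℓ,n} = diag(−2ℓ, 0, …, 0) if n is odd and P_{2ℓ,n} = diag(−2ℓ+1, 0, …, 0) if n is even. Then for all 1 ≤ i < j ≤ 2ℓ, the sign of det(P_{i,n} − P_{j,n}), taken in {−1, 0, 1}, equals the entry (A_{n,ℓ})_{ij}. -/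
open Matrix

/-- Entry of the antisymmetric matrix `S_N` whose entries above the diagonal are all `1`
(indices are 0-based naturals). -/
def SmatE (p q : ℕ) : ℤ := if p < q then 1 else if q < p then -1 else 0

/-- The vector `v_{n,ℓ} ∈ ℤ^{2ℓ-1}` (0-based index `p`). -/
def vvecE (n ℓ p : ℕ) : ℤ :=
  if p < n then (-1) ^ p
  else if p = 2 * ℓ - 2 ∧ Even n then 0
  else 1

/-- Entry of the 2ℓ×2ℓ block matrix `A_{n,ℓ} = [[S_{2ℓ-1}, v_{n,ℓ}], [-v_{n,ℓ}ᵀ, 0]]`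
(0-based indices). -/
def AmatE (n ℓ p q : ℕ) : ℤ :=
  if p < 2 * ℓ - 1 then
    (if q < 2 * ℓ - 1 then SmatE p q else vvecE n ℓ p)
  else
    (if q < 2 * ℓ - 1 then -(vvecE n ℓ q) else 0)

/-- The antisymmetric 2ℓ×2ℓ integer matrix `A_{n,ℓ}`. -/
def Amat (n ℓ : ℕ) : Matrix (Fin (2 * ℓ)) (Fin (2 * ℓ)) ℤ :=
  Matrix.of fun i j => AmatE n ℓ (i : ℕ) (j : ℕ)

/-- The diagonal matrix `P_{i,n}` (with `i` a 1-based index in `{1, …, 2ℓ}`); cf. the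
case list in the paper: `diag(-i, i, …, i)` for `i` odd, `i ≤ n`; `diag(i, -i, i, …, i)`
for `i` even, `i ≤ n`; `diag(i, i, 1/i, …, 1/i)` for `n+1 ≤ i ≤ 2ℓ-2`;
`diag(2ℓ-1, 2ℓ-1, 1/(2ℓ-1), …)` resp. `diag(2ℓ-1, 2ℓ-1, 0, …, 0)` for `i = 2ℓ-1` and
`n` odd resp. even; `diag(-2ℓ, 0, …, 0)` resp. `diag(-2ℓ+1, 0, …, 0)` for `i = 2ℓ` and
`n` odd resp. even. -/
noncomputable def Pdiag (m n ℓ : ℕ) (i : ℕ) : Matrix (Fin (2 * m + 1)) (Fin (2 * m + 1)) ℝ :=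
  Matrix.diagonal fun j =>
    if i ≤ n then
      (if ¬ Even i then (if (j : ℕ) = 0 then -(i : ℝ) else (i : ℝ))
       else (if (j : ℕ) = 1 then -(i : ℝ) else (i : ℝ)))
    else if i + 2 ≤ 2 * ℓ then
      (if (j : ℕ) < 2 then (i : ℝ) else 1 / (i : ℝ))
    else if i + 1 = 2 * ℓ then
      (if (j : ℕ) < 2 then (2 * ℓ : ℝ) - 1
       else (if ¬ Even n then 1 / ((2 * ℓ : ℝ) - 1) else 0))
    else
      (if (j : ℕ) = 0 then (if ¬ Even n then -(2 * ℓ : ℝ) else -((2 * ℓ : ℝ) - 1)) else 0)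


/-- The diagonal entry of `P_{i,n}` as a function of the index class `k ∈ {0,1,2}`. -/
noncomputable def ent (n ℓ i k : ℕ) : ℝ :=
  if i ≤ n then
    (if ¬ Even i then (if k = 0 then -(i : ℝ) else (i : ℝ))
     else (if k = 1 then -(i : ℝ) else (i : ℝ)))
  else if i + 2 ≤ 2 * ℓ then
    (if k < 2 then (i : ℝ) else 1 / (i : ℝ))
  else if i + 1 = 2 * ℓ then
    (if k < 2 then (2 * ℓ : ℝ) - 1
     else (if ¬ Even n then 1 / ((2 * ℓ : ℝ) - 1) else 0))
  else
    (if k = 0 then (if ¬ Even n then -(2 * ℓ : ℝ) else -((2 * ℓ : ℝ) - 1)) else 0)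

lemma prod_sub_if (M N : ℕ) (h : M = N + 2) (a b c a' b' c' : ℝ) :
    (∏ k : Fin M, ((if (k : ℕ) = 0 then a else if (k : ℕ) = 1 then b else c)
      - (if (k : ℕ) = 0 then a' else if (k : ℕ) = 1 then b' else c')))
    = (a - a') * (b - b') * ((c - c') ^ N) := by
  subst h
  rw [Fin.prod_univ_succ, Fin.prod_univ_succ]
  simp [Fin.val_succ, mul_assoc]

lemma sign_abc (m : ℕ) (hm : 1 ≤ m) (a b c : ℝ) :
    SignType.sign (a * b * c ^ (2 * m - 1))
      = SignType.sign a * SignType.sign b * SignType.sign c := by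
  rw [sign_mul, sign_mul, sign_pow]
  have hodd : Odd (2 * m - 1) := ⟨m - 1, by omega⟩
  congr 1
  rcases h : SignType.sign c with _ | _ | _
  · exact zero_pow (by omega)
  · exact hodd.neg_one_pow
  · exact one_pow _

lemma Pdiag_eq (m n ℓ i : ℕ) :
    Pdiag m n ℓ i = Matrix.diagonal (fun k : Fin (2 * m + 1) =>
      if (k : ℕ) = 0 then ent n ℓ i 0 else if (k : ℕ) = 1 then ent n ℓ i 1
      else ent n ℓ i 2) := by
  unfold Pdiag ent
  refine congrArg Matrix.diagonal (funext fun k => ?_)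
  by_cases h0 : (k : ℕ) = 0
  · simp [h0]
  · by_cases h1 : (k : ℕ) = 1
    · simp [h1]
    · have h2 : ¬ (k : ℕ) < 2 := by omega
      simp [h0, h1, h2]


lemma entA_even (n ℓ i : ℕ) (h : i ≤ n) (he : Even i) :
    ent n ℓ i 0 = (i : ℝ) ∧ ent n ℓ i 1 = -(i : ℝ) ∧ ent n ℓ i 2 = (i : ℝ) := by
  refine ⟨?_, ?_, ?_⟩ <;> simp [ent, h, he]

lemma entA_odd (n ℓ i : ℕ) (h : i ≤ n) (he : ¬ Even i) :
    ent n ℓ i 0 = -(i : ℝ) ∧ ent n ℓ i 1 = (i : ℝ) ∧ ent n ℓ i 2 = (i : ℝ) := by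
  refine ⟨?_, ?_, ?_⟩ <;> simp [ent, h, he]

lemma entB (n ℓ i : ℕ) (h1 : ¬ i ≤ n) (h2 : i + 2 ≤ 2 * ℓ) :
    ent n ℓ i 0 = (i : ℝ) ∧ ent n ℓ i 1 = (i : ℝ) ∧ ent n ℓ i 2 = 1 / (i : ℝ) := by
  refine ⟨?_, ?_, ?_⟩ <;> simp [ent, h1, h2]

lemma entC (n ℓ i : ℕ) (h1 : ¬ i ≤ n) (h2 : ¬ i + 2 ≤ 2 * ℓ) (h3 : i + 1 = 2 * ℓ) :
    ent n ℓ i 0 = 2 * (ℓ : ℝ) - 1 ∧ ent n ℓ i 1 = 2 * (ℓ : ℝ) - 1 ∧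
      ent n ℓ i 2 = (if ¬ Even n then 1 / (2 * (ℓ : ℝ) - 1) else 0) := by
  refine ⟨?_, ?_, ?_⟩ <;> simp [ent, h1, h2, h3]

lemma entD (n ℓ i : ℕ) (h1 : ¬ i ≤ n) (h2 : ¬ i + 2 ≤ 2 * ℓ) (h3 : ¬ i + 1 = 2 * ℓ) :
    ent n ℓ i 0 = (if ¬ Even n then -(2 * (ℓ : ℝ)) else -(2 * (ℓ : ℝ) - 1)) ∧
      ent n ℓ i 1 = 0 ∧ ent n ℓ i 2 = 0 := by
  refine ⟨?_, ?_, ?_⟩ <;> simp [ent, h1, h2, h3]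

lemma entCase (n ℓ I J : ℕ) (hn : 0 < n) (hℓ : 0 < ℓ)
    (heven : Even n → n + 2 ≤ 2 * ℓ) (hodd : ¬Even n → n + 1 ≤ 2 * ℓ)
    (hI : 1 ≤ I) (hIJ : I < J) (hJ : J ≤ 2 * ℓ) :
    ((SignType.sign (ent n ℓ I 0 - ent n ℓ J 0) * SignType.sign (ent n ℓ I 1 - ent n ℓ J 1)
      * SignType.sign (ent n ℓ I 2 - ent n ℓ J 2) : SignType) : ℤ) = AmatE n ℓ (I - 1) (J - 1) := by
  have hn2ℓ : n + 1 ≤ 2 * ℓ := by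
    by_cases h : Even n
    · have := heven h; omega
    · have := hodd h; omega
  have hL : (1 : ℝ) ≤ (ℓ : ℝ) := by exact_mod_cast hℓ
  have hx : (1 : ℝ) ≤ (I : ℝ) := by exact_mod_cast hI
  have hxy : (I : ℝ) < (J : ℝ) := by exact_mod_cast hIJ
  have hyL : (J : ℝ) ≤ 2 * (ℓ : ℝ) := by exact_mod_cast hJ
  by_cases hIA : I ≤ n
  · have hxn2 : (I : ℝ) + 1 ≤ 2 * (ℓ : ℝ) := by exact_mod_cast (by omega : I + 1 ≤ 2 * ℓ)
    by_cases hJA : J ≤ n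
    · -- both in region A
      have hR : AmatE n ℓ (I - 1) (J - 1) = 1 := by
        unfold AmatE SmatE
        rw [if_pos (by omega), if_pos (by omega), if_pos (by omega)]
      rw [hR]
      by_cases hIe : Even I <;> by_cases hJe : Even J
      · obtain ⟨a0, a1, a2⟩ := entA_even n ℓ I hIA hIe
        obtain ⟨b0, b1, b2⟩ := entA_even n ℓ J hJA hJe
        have s0 : SignType.sign (ent n ℓ I 0 - ent n ℓ J 0) = -1 := by
          rw [a0, b0]; exact sign_neg (by linarith)
        have s1 : SignType.sign (ent n ℓ I 1 - ent n ℓ J 1) = 1 := by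
          rw [a1, b1]; exact sign_pos (by linarith)
        have s2 : SignType.sign (ent n ℓ I 2 - ent n ℓ J 2) = -1 := by
          rw [a2, b2]; exact sign_neg (by linarith)
        rw [s0, s1, s2]; decide
      · obtain ⟨a0, a1, a2⟩ := entA_even n ℓ I hIA hIe
        obtain ⟨b0, b1, b2⟩ := entA_odd n ℓ J hJA hJe
        have s0 : SignType.sign (ent n ℓ I 0 - ent n ℓ J 0) = 1 := by
          rw [a0, b0]; exact sign_pos (by linarith)
        have s1 : SignType.sign (ent n ℓ I 1 - ent n ℓ J 1) = -1 := by
          rw [a1, b1]; exact sign_neg (by linarith)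
        have s2 : SignType.sign (ent n ℓ I 2 - ent n ℓ J 2) = -1 := by
          rw [a2, b2]; exact sign_neg (by linarith)
        rw [s0, s1, s2]; decide
      · obtain ⟨a0, a1, a2⟩ := entA_odd n ℓ I hIA hIe
        obtain ⟨b0, b1, b2⟩ := entA_even n ℓ J hJA hJe
        have s0 : SignType.sign (ent n ℓ I 0 - ent n ℓ J 0) = -1 := by
          rw [a0, b0]; exact sign_neg (by linarith)
        have s1 : SignType.sign (ent n ℓ I 1 - ent n ℓ J 1) = 1 := by
          rw [a1, b1]; exact sign_pos (by linarith)
        have s2 : SignType.sign (ent n ℓ I 2 - ent n ℓ J 2) = -1 := by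
          rw [a2, b2]; exact sign_neg (by linarith)
        rw [s0, s1, s2]; decide
      · obtain ⟨a0, a1, a2⟩ := entA_odd n ℓ I hIA hIe
        obtain ⟨b0, b1, b2⟩ := entA_odd n ℓ J hJA hJe
        have s0 : SignType.sign (ent n ℓ I 0 - ent n ℓ J 0) = 1 := by
          rw [a0, b0]; exact sign_pos (by linarith)
        have s1 : SignType.sign (ent n ℓ I 1 - ent n ℓ J 1) = -1 := by
          rw [a1, b1]; exact sign_neg (by linarith)
        have s2 : SignType.sign (ent n ℓ I 2 - ent n ℓ J 2) = -1 := by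
          rw [a2, b2]; exact sign_neg (by linarith)
        rw [s0, s1, s2]; decide
    · by_cases hJB : J + 2 ≤ 2 * ℓ
      · -- I in A, J in B
        have hR : AmatE n ℓ (I - 1) (J - 1) = 1 := by
          unfold AmatE SmatE
          rw [if_pos (by omega), if_pos (by omega), if_pos (by omega)]
        rw [hR]
        obtain ⟨b0, b1, b2⟩ := entB n ℓ J hJA hJB
        have hinv : 1 / (J : ℝ) < 1 := by
          rw [div_lt_one (by linarith)]; linarith
        have s2 : SignType.sign (ent n ℓ I 2 - ent n ℓ J 2) = 1 := by
          by_cases hIe : Even I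
          · rw [(entA_even n ℓ I hIA hIe).2.2, b2]; exact sign_pos (by linarith)
          · rw [(entA_odd n ℓ I hIA hIe).2.2, b2]; exact sign_pos (by linarith)
        by_cases hIe : Even I
        · obtain ⟨a0, a1, a2⟩ := entA_even n ℓ I hIA hIe
          have s0 : SignType.sign (ent n ℓ I 0 - ent n ℓ J 0) = -1 := by
            rw [a0, b0]; exact sign_neg (by linarith)
          have s1 : SignType.sign (ent n ℓ I 1 - ent n ℓ J 1) = -1 := by
            rw [a1, b1]; exact sign_neg (by linarith)
          rw [s0, s1, s2]; decide
        · obtain ⟨a0, a1, a2⟩ := entA_odd n ℓ I hIA hIe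
          have s0 : SignType.sign (ent n ℓ I 0 - ent n ℓ J 0) = -1 := by
            rw [a0, b0]; exact sign_neg (by linarith)
          have s1 : SignType.sign (ent n ℓ I 1 - ent n ℓ J 1) = -1 := by
            rw [a1, b1]; exact sign_neg (by linarith)
          rw [s0, s1, s2]; decide
      · by_cases hJC : J + 1 = 2 * ℓ
        · -- I in A, J in C
          have hR : AmatE n ℓ (I - 1) (J - 1) = 1 := by
            unfold AmatE SmatE
            rw [if_pos (by omega), if_pos (by omega), if_pos (by omega)]
          rw [hR]
          obtain ⟨b0, b1, b2⟩ := entC n ℓ J hJA hJB hJC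
          have hy : (J : ℝ) = 2 * (ℓ : ℝ) - 1 := by
            have : ((J : ℝ) + 1) = 2 * (ℓ : ℝ) := by exact_mod_cast hJC
            linarith
          have s2 : SignType.sign (ent n ℓ I 2 - ent n ℓ J 2) = 1 := by
            have hI2 : ent n ℓ I 2 = (I : ℝ) := by
              by_cases hIe : Even I
              · exact (entA_even n ℓ I hIA hIe).2.2
              · exact (entA_odd n ℓ I hIA hIe).2.2
            rw [hI2, b2]
            by_cases hne : Even n
            · rw [if_neg (not_not_intro hne)]; exact sign_pos (by linarith)
            · rw [if_pos hne]
              have hinv : 1 / (2 * (ℓ : ℝ) - 1) < 1 := by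
                rw [div_lt_one (by linarith)]; linarith
              exact sign_pos (by linarith)
          by_cases hIe : Even I
          · obtain ⟨a0, a1, a2⟩ := entA_even n ℓ I hIA hIe
            have s0 : SignType.sign (ent n ℓ I 0 - ent n ℓ J 0) = -1 := by
              rw [a0, b0]; exact sign_neg (by linarith)
            have s1 : SignType.sign (ent n ℓ I 1 - ent n ℓ J 1) = -1 := by
              rw [a1, b1]; exact sign_neg (by linarith)
            rw [s0, s1, s2]; decide
          · obtain ⟨a0, a1, a2⟩ := entA_odd n ℓ I hIA hIe
            have s0 : SignType.sign (ent n ℓ I 0 - ent n ℓ J 0) = -1 := by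
              rw [a0, b0]; exact sign_neg (by linarith)
            have s1 : SignType.sign (ent n ℓ I 1 - ent n ℓ J 1) = -1 := by
              rw [a1, b1]; exact sign_neg (by linarith)
            rw [s0, s1, s2]; decide
        · -- I in A, J = 2ℓ (region D)
          obtain ⟨b0, b1, b2⟩ := entD n ℓ J hJA hJB hJC
          have hd0 : 0 < ent n ℓ I 0 - ent n ℓ J 0 ∨ True := Or.inr trivial
          by_cases hIe : Even I
          · have hR : AmatE n ℓ (I - 1) (J - 1) = -1 := by
              unfold AmatE vvecE
              rw [if_pos (by omega), if_neg (by omega), if_pos (by omega)]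
              obtain ⟨k, hk⟩ := hIe
              have hodd' : Odd (I - 1) := ⟨k - 1, by omega⟩
              rw [hodd'.neg_one_pow]
            rw [hR]
            obtain ⟨a0, a1, a2⟩ := entA_even n ℓ I hIA hIe
            have s0 : SignType.sign (ent n ℓ I 0 - ent n ℓ J 0) = 1 := by
              rw [a0, b0]
              by_cases hne : Even n
              · rw [if_neg (not_not_intro hne)]; exact sign_pos (by linarith)
              · rw [if_pos hne]; exact sign_pos (by linarith)
            have s1 : SignType.sign (ent n ℓ I 1 - ent n ℓ J 1) = -1 := by
              rw [a1, b1]; exact sign_neg (by linarith)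
            have s2 : SignType.sign (ent n ℓ I 2 - ent n ℓ J 2) = 1 := by
              rw [a2, b2]; exact sign_pos (by linarith)
            rw [s0, s1, s2]; decide
          · have hR : AmatE n ℓ (I - 1) (J - 1) = 1 := by
              unfold AmatE vvecE
              rw [if_pos (by omega), if_neg (by omega), if_pos (by omega)]
              obtain ⟨k, hk⟩ := Nat.not_even_iff_odd.mp hIe
              have heven' : Even (I - 1) := ⟨k, by omega⟩
              rw [heven'.neg_one_pow]
            rw [hR]
            obtain ⟨a0, a1, a2⟩ := entA_odd n ℓ I hIA hIe
            have s0 : SignType.sign (ent n ℓ I 0 - ent n ℓ J 0) = 1 := by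
              rw [a0, b0]
              by_cases hne : Even n
              · have hxn2' : (I : ℝ) + 2 ≤ 2 * (ℓ : ℝ) := by
                  exact_mod_cast (by have := heven hne; omega : I + 2 ≤ 2 * ℓ)
                rw [if_neg (not_not_intro hne)]; exact sign_pos (by linarith)
              · rw [if_pos hne]; exact sign_pos (by linarith)
            have s1 : SignType.sign (ent n ℓ I 1 - ent n ℓ J 1) = 1 := by
              rw [a1, b1]; exact sign_pos (by linarith)
            have s2 : SignType.sign (ent n ℓ I 2 - ent n ℓ J 2) = 1 := by
              rw [a2, b2]; exact sign_pos (by linarith)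
            rw [s0, s1, s2]; decide
  · by_cases hIB : I + 2 ≤ 2 * ℓ
    · have hxinv : 0 < 1 / (I : ℝ) := by positivity
      have hx2L : (I : ℝ) + 2 ≤ 2 * (ℓ : ℝ) := by exact_mod_cast hIB
      obtain ⟨a0, a1, a2⟩ := entB n ℓ I hIA hIB
      by_cases hJB : J + 2 ≤ 2 * ℓ
      · -- both in B
        have hR : AmatE n ℓ (I - 1) (J - 1) = 1 := by
          unfold AmatE SmatE
          rw [if_pos (by omega), if_pos (by omega), if_pos (by omega)]
        rw [hR]
        obtain ⟨b0, b1, b2⟩ := entB n ℓ J (by omega) hJB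
        have hinv : 1 / (J : ℝ) < 1 / (I : ℝ) :=
          one_div_lt_one_div_of_lt (by linarith) hxy
        have s0 : SignType.sign (ent n ℓ I 0 - ent n ℓ J 0) = -1 := by
          rw [a0, b0]; exact sign_neg (by linarith)
        have s1 : SignType.sign (ent n ℓ I 1 - ent n ℓ J 1) = -1 := by
          rw [a1, b1]; exact sign_neg (by linarith)
        have s2 : SignType.sign (ent n ℓ I 2 - ent n ℓ J 2) = 1 := by
          rw [a2, b2]; exact sign_pos (by linarith)
        rw [s0, s1, s2]; decide
      · by_cases hJC : J + 1 = 2 * ℓ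
        · -- I in B, J in C
          have hR : AmatE n ℓ (I - 1) (J - 1) = 1 := by
            unfold AmatE SmatE
            rw [if_pos (by omega), if_pos (by omega), if_pos (by omega)]
          rw [hR]
          obtain ⟨b0, b1, b2⟩ := entC n ℓ J (by omega) hJB hJC
          have s0 : SignType.sign (ent n ℓ I 0 - ent n ℓ J 0) = -1 := by
            rw [a0, b0]; exact sign_neg (by linarith)
          have s1 : SignType.sign (ent n ℓ I 1 - ent n ℓ J 1) = -1 := by
            rw [a1, b1]; exact sign_neg (by linarith)
          have s2 : SignType.sign (ent n ℓ I 2 - ent n ℓ J 2) = 1 := by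
            rw [a2, b2]
            by_cases hne : Even n
            · rw [if_neg (not_not_intro hne)]; exact sign_pos (by linarith)
            · rw [if_pos hne]
              have := one_div_lt_one_div_of_lt (show (0:ℝ) < I by linarith)
                (show (I : ℝ) < 2 * (ℓ : ℝ) - 1 by linarith)
              exact sign_pos (by linarith)
          rw [s0, s1, s2]; decide
        · -- I in B, J = 2ℓ
          have hR : AmatE n ℓ (I - 1) (J - 1) = 1 := by
            unfold AmatE vvecE
            rw [if_pos (by omega), if_neg (by omega), if_neg (by omega),
              if_neg (by rintro ⟨h1, -⟩; omega)]
          rw [hR]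
          obtain ⟨b0, b1, b2⟩ := entD n ℓ J (by omega) hJB hJC
          have s0 : SignType.sign (ent n ℓ I 0 - ent n ℓ J 0) = 1 := by
            rw [a0, b0]
            by_cases hne : Even n
            · rw [if_neg (not_not_intro hne)]; exact sign_pos (by linarith)
            · rw [if_pos hne]; exact sign_pos (by linarith)
          have s1 : SignType.sign (ent n ℓ I 1 - ent n ℓ J 1) = 1 := by
            rw [a1, b1]; exact sign_pos (by linarith)
          have s2 : SignType.sign (ent n ℓ I 2 - ent n ℓ J 2) = 1 := by
            rw [a2, b2]; exact sign_pos (by linarith)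
          rw [s0, s1, s2]; decide
    · -- I in C, J = 2ℓ
      have hIC : I + 1 = 2 * ℓ := by omega
      obtain ⟨a0, a1, a2⟩ := entC n ℓ I hIA hIB hIC
      obtain ⟨b0, b1, b2⟩ := entD n ℓ J (by omega) (by omega) (by omega)
      have h21 : (1 : ℝ) ≤ 2 * (ℓ : ℝ) - 1 := by
        have : (2 : ℝ) ≤ 2 * (ℓ : ℝ) := by linarith
        linarith
      have s1 : SignType.sign (ent n ℓ I 1 - ent n ℓ J 1) = 1 := by
        rw [a1, b1]; exact sign_pos (by linarith)
      by_cases hne : Even n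
      · have hR : AmatE n ℓ (I - 1) (J - 1) = 0 := by
          unfold AmatE vvecE
          rw [if_pos (by omega), if_neg (by omega), if_neg (by omega),
            if_pos ⟨by omega, hne⟩]
        rw [hR]
        have s0 : SignType.sign (ent n ℓ I 0 - ent n ℓ J 0) = 1 := by
          rw [a0, b0, if_neg (not_not_intro hne)]; exact sign_pos (by linarith)
        have s2 : SignType.sign (ent n ℓ I 2 - ent n ℓ J 2) = 0 := by
          rw [a2, b2, if_neg (not_not_intro hne)]; norm_num
        rw [s0, s1, s2]; decide
      · have hR : AmatE n ℓ (I - 1) (J - 1) = 1 := by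
          unfold AmatE vvecE
          rw [if_pos (by omega), if_neg (by omega), if_neg (by omega),
            if_neg (by rintro ⟨-, h2⟩; exact hne h2)]
        rw [hR]
        have s0 : SignType.sign (ent n ℓ I 0 - ent n ℓ J 0) = 1 := by
          rw [a0, b0, if_pos hne]; exact sign_pos (by linarith)
        have s2 : SignType.sign (ent n ℓ I 2 - ent n ℓ J 2) = 1 := by
          rw [a2, b2, if_pos hne]
          have := one_div_pos.mpr (show (0:ℝ) < 2 * (ℓ:ℝ) - 1 by linarith)
          exact sign_pos (by linarith)
        rw [s0, s1, s2]; decide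
/-- for all 1-based indices `i < j` in `{1, …, 2ℓ}`, the sign of
`det (P_{i,n} - P_{j,n})`, taken in {-1, 0, 1}, equals the entry `(A_{n,ℓ})_{ij}`.
(Below, `i j : Fin (2ℓ)` are 0-based, so the corresponding 1-based indices are
`i + 1` and `j + 1`.) -/
theorem Amat_realised_by_determinant_signs (m n ℓ : ℕ) (hm : 1 ≤ m)
    (hn : 0 < n) (hℓ : 0 < ℓ)
    (heven : Even n → n + 2 ≤ 2 * ℓ) (hodd : ¬Even n → n + 1 ≤ 2 * ℓ) :
    ∀ i j : Fin (2 * ℓ), (i : ℕ) < (j : ℕ) →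
      ((SignType.sign ((Pdiag m n ℓ ((i : ℕ) + 1) - Pdiag m n ℓ ((j : ℕ) + 1)).det) : ℤ)
        = Amat n ℓ i j) := by
  intro i j hij
  rw [Pdiag_eq, Pdiag_eq, Matrix.diagonal_sub, Matrix.det_diagonal]
  rw [prod_sub_if (2 * m + 1) (2 * m - 1) (by omega), sign_abc m hm]
  have hAm : Amat n ℓ i j = AmatE n ℓ ((i : ℕ) + 1 - 1) ((j : ℕ) + 1 - 1) := by
    simp [Amat]
  rw [hAm]
  exact entCase n ℓ ((i : ℕ) + 1) ((j : ℕ) + 1) hn hℓ heven hodd (by omega)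
    (by omega) j.isLt
end
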